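/- For every edge set F of a hypergraph G, bw_G(clos(F)) ≤ bw_G(F), where clos(F) is the set of all hyperedges of G contained in V(F). -/

import Mathlib

open Finset

universe u

/-- Rooted binary trees whose leaves carry labels of type `α`.  Every node has
at most two children; each leaf carries the edge assigned to it, so the leaf
map `φ` is built into the tree. -/
inductive BTree (α : Type u) : Type u where
  | leaf : α → BTree α
  | node1 : BTree α → BTree α
  | node2 : BTree α → BTree α → BTree α

namespace BTree

variable {α : Type u}

/-- The multiset of labels of the leaves of a tree. -/
def leafLabels : BTree α → Multiset α
  | leaf a => {a}
  | node1 c => leafLabels c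
  | node2 c₁ c₂ => leafLabels c₁ + leafLabels c₂

/-- `s.Occurs t` : `s` is (the subtree rooted at) a node of `t`. -/
def Occurs (s : BTree α) : BTree α → Prop
  | leaf a => s = leaf a
  | node1 c => s = node1 c ∨ Occurs s c
  | node2 c₁ c₂ => s = node2 c₁ c₂ ∨ Occurs s c₁ ∨ Occurs s c₂

/-- A tree is full if every internal node has exactly two children. -/
def IsFull : BTree α → Prop
  | leaf _ => True
  | node1 _ => False
  | node2 c₁ c₂ => IsFull c₁ ∧ IsFull c₂

/-- The list of all (subtrees rooted at) nodes of a tree. -/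
def nodes : BTree α → List (BTree α)
  | leaf a => [leaf a]
  | node1 c => node1 c :: nodes c
  | node2 c₁ c₂ => node2 c₁ c₂ :: (nodes c₁ ++ nodes c₂)

end BTree

variable {V : Type u} [DecidableEq V] [Fintype V]

/-- `vtxs F` is `V(F)` : the union of the hyperedges in `F`. -/
def vtxs (F : Finset (Finset V)) : Finset V := F.sup id

/-- The boundary `∂(F) = V(F) ∩ V(E ∖ F)` of an edge set `F` of the hypergraph
with edge set `E`. -/
def ebnd (E F : Finset (Finset V)) : Finset V := vtxs F ∩ vtxs (E \ F)

/-- `t` is a (relaxed) branch-decomposition of the edge set `F` : the set of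
leaf labels is exactly `F`, i.e. the leaf map is a surjection onto `F`. -/
def IsBD (F : Finset (Finset V)) (t : BTree (Finset V)) : Prop :=
  t.leafLabels.toFinset = F

/-- The lower edge set `L(p)` of a node `p` : the edges assigned to the leaves
in the subtree rooted at `p`. -/
def lowerSet (p : BTree (Finset V)) : Finset (Finset V) := p.leafLabels.toFinset

/-- The upper edge set `U(p)` of a node `p` of a branch-decomposition `t` of
`F` in the hypergraph with edge set `E` : the edges assigned to leaves outside
the subtree rooted at `p`, together with `E ∖ F`. -/
def upperSet (E F : Finset (Finset V)) (t p : BTree (Finset V)) : Finset (Finset V) :=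
  (t.leafLabels - p.leafLabels).toFinset ∪ (E \ F)

/-- The middle set `V(L(p)) ∩ V(U(p))` of a node `p`. -/
def midSet (E F : Finset (Finset V)) (t p : BTree (Finset V)) : Finset V :=
  vtxs (lowerSet p) ∩ vtxs (upperSet E F t p)

/-- The width of a branch-decomposition: the maximum order of a node. -/
def bdWidth (E F : Finset (Finset V)) (t : BTree (Finset V)) : ℕ :=
  (t.nodes.map (fun p => (midSet E F t p).card)).foldr max 0

/-- The branchwidth `bw_G(F)` of an edge set `F` of the hypergraph with edge
set `E` : the minimum width of a branch-decomposition of `F`. -/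
noncomputable def ebw (E F : Finset (Finset V)) : ℕ :=
  sInf {w | ∃ t : BTree (Finset V), IsBD F t ∧ bdWidth E F t = w}

/-- The branchwidth of a hypergraph given by its edge set. -/
noncomputable def hbw (E : Finset (Finset V)) : ℕ := ebw E E

/-- `clos(F)` : the set of hyperedges of `G` contained in `V(F)`. -/
def eclos (E F : Finset (Finset V)) : Finset (Finset V) :=
  E.filter (fun e => e ⊆ vtxs F)

namespace BTree

variable {α : Type*}

theorem leafLabels_ne_zero (t : BTree α) : t.leafLabels ≠ 0 := by
  induction t with
  | leaf a => simp [leafLabels]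
  | node1 c ih => exact ih
  | node2 c₁ c₂ ih₁ _ => simp [leafLabels, ih₁]

theorem self_mem_nodes (t : BTree α) : t ∈ t.nodes := by
  cases t <;> simp [nodes]

theorem leafLabels_le_of_mem_nodes {p t : BTree α} (h : p ∈ t.nodes) :
    p.leafLabels ≤ t.leafLabels := by
  induction t with
  | leaf a =>
    obtain rfl : p = leaf a := by simpa [nodes] using h
    exact le_rfl
  | node1 c ih =>
    rcases List.mem_cons.mp h with rfl | h
    · exact le_rfl
    · exact ih h
  | node2 c₁ c₂ ih₁ ih₂ =>
    rcases List.mem_cons.mp h with rfl | h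
    · exact le_rfl
    rcases List.mem_append.mp h with h | h
    · exact (ih₁ h).trans (Multiset.le_add_right _ _)
    · exact (ih₂ h).trans (Multiset.le_add_left _ _)

theorem exists_leafLabels_toFinset_eq [DecidableEq α] {S : Finset α} (hS : S.Nonempty) :
    ∃ t : BTree α, t.leafLabels.toFinset = S := by
  induction hS using Finset.Nonempty.cons_induction with
  | singleton a => exact ⟨leaf a, by simp [leafLabels]⟩
  | cons a S _ _ ih =>
    obtain ⟨t, ht⟩ := ih
    refine ⟨node2 (leaf a) t, ?_⟩
    rw [Finset.cons_eq_insert, Finset.insert_eq]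
    simp [leafLabels, ht]

end BTree

section

variable {α : Type*} [DecidableEq α] {E F D : Finset (Finset α)}

theorem subset_vtxs {e : Finset α} (he : e ∈ F) : e ⊆ vtxs F :=
  Finset.le_sup (f := id) he

theorem vtxs_subset_iff {X : Finset α} : vtxs F ⊆ X ↔ ∀ e ∈ F, e ⊆ X :=
  Finset.sup_le_iff

theorem vtxs_mono (h : F ⊆ D) : vtxs F ⊆ vtxs D :=
  Finset.sup_mono h

theorem vtxs_eclos_subset (E F : Finset (Finset α)) : vtxs (eclos E F) ⊆ vtxs F :=
  vtxs_subset_iff.mpr fun _ he => (Finset.mem_filter.mp he).2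

theorem subset_eclos (hFE : F ⊆ E) : F ⊆ eclos E F :=
  fun _ he => Finset.mem_filter.mpr ⟨hFE he, subset_vtxs he⟩

theorem ebnd_subset_ebnd {F' : Finset (Finset α)} (hF : F ⊆ F') (hV : vtxs F' ⊆ vtxs F) :
    ebnd E F' ⊆ ebnd E F :=
  Finset.inter_subset_inter hV (vtxs_mono (Finset.sdiff_subset_sdiff subset_rfl hF))

theorem vtxs_union : vtxs (F ∪ D) = vtxs F ∪ vtxs D :=
  Finset.sup_union

theorem lowerSet_subset_of_mem_nodes {p t : BTree (Finset α)} (hp : p ∈ t.nodes) :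
    lowerSet p ⊆ lowerSet t :=
  Multiset.toFinset_subset.mpr (Multiset.subset_of_le (BTree.leafLabels_le_of_mem_nodes hp))

theorem upperSet_node2_of_mem_nodes {t s p : BTree (Finset α)} (hp : p ∈ t.nodes)
    (hsE : lowerSet s ⊆ E \ F) :
    upperSet E (F ∪ lowerSet s) (.node2 t s) p = upperSet E F t p := by
  rw [upperSet, upperSet, BTree.leafLabels,
    ← tsub_add_eq_add_tsub (BTree.leafLabels_le_of_mem_nodes hp), Multiset.toFinset_add,
    Finset.sdiff_union_distrib, ← Finset.sdiff_sdiff_left', Finset.union_assoc, ← lowerSet,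
    Finset.union_sdiff_of_subset hsE]

theorem midSet_subset_vtxs_lowerSet (t p : BTree (Finset α)) :
    midSet E F t p ⊆ vtxs (lowerSet p) :=
  Finset.inter_subset_left

theorem midSet_self {t : BTree (Finset α)} (ht : IsBD F t) : midSet E F t t = ebnd E F := by
  rw [midSet, upperSet, tsub_self, lowerSet, ht]
  simp [ebnd]

theorem card_midSet_le_bdWidth {t p : BTree (Finset α)} (hp : p ∈ t.nodes) :
    (midSet E F t p).card ≤ bdWidth E F t :=
  List.le_max_of_le (List.mem_map_of_mem hp) le_rfl

theorem bdWidth_le {t : BTree (Finset α)} {w : ℕ}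
    (h : ∀ p ∈ t.nodes, (midSet E F t p).card ≤ w) : bdWidth E F t ≤ w :=
  List.max_le_of_forall_le _ _ (by simpa using h)

theorem card_ebnd_le_bdWidth {t : BTree (Finset α)} (ht : IsBD F t) :
    (ebnd E F).card ≤ bdWidth E F t :=
  midSet_self ht ▸ card_midSet_le_bdWidth t.self_mem_nodes

theorem bdWidth_le_card_vtxs {t : BTree (Finset α)} (ht : IsBD F t) :
    bdWidth E F t ≤ (vtxs F).card :=
  bdWidth_le fun p hp => Finset.card_le_card <| (midSet_subset_vtxs_lowerSet t p).trans <|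
    vtxs_mono (ht ▸ lowerSet_subset_of_mem_nodes hp)

theorem isBD_node2 {t s : BTree (Finset α)} (ht : IsBD F t) (hs : IsBD D s) :
    IsBD (F ∪ D) (.node2 t s) := by
  rw [IsBD, BTree.leafLabels, Multiset.toFinset_add, ht, hs]

theorem bdWidth_node2_le {t s : BTree (Finset α)} (ht : IsBD F t) (hsE : lowerSet s ⊆ E \ F)
    (hsF : vtxs (lowerSet s) ⊆ vtxs F) :
    bdWidth E (F ∪ lowerSet s) (.node2 t s) ≤ bdWidth E F t := by
  have hts : IsBD (F ∪ lowerSet s) (.node2 t s) := isBD_node2 ht rfl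
  have hbnd : vtxs (lowerSet s) ⊆ ebnd E F := Finset.subset_inter hsF (vtxs_mono hsE)
  refine bdWidth_le fun p hp => ?_
  rcases List.mem_cons.mp hp with rfl | hp
  · calc (midSet E (F ∪ lowerSet s) _ _).card = (ebnd E (F ∪ lowerSet s)).card := by
          rw [midSet_self hts]
      _ ≤ (ebnd E F).card := Finset.card_le_card <| ebnd_subset_ebnd Finset.subset_union_left
          (vtxs_union.trans_subset (Finset.union_subset subset_rfl hsF))
      _ ≤ bdWidth E F t := card_ebnd_le_bdWidth ht
  rcases List.mem_append.mp hp with hp | hp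
  · rw [midSet, upperSet_node2_of_mem_nodes hp hsE]
    exact card_midSet_le_bdWidth hp
  · calc (midSet E (F ∪ lowerSet s) _ p).card ≤ (ebnd E F).card := Finset.card_le_card <|
          (midSet_subset_vtxs_lowerSet _ p).trans <|
            (vtxs_mono (lowerSet_subset_of_mem_nodes hp)).trans hbnd
      _ ≤ bdWidth E F t := card_ebnd_le_bdWidth ht

theorem ebw_le_bdWidth {t : BTree (Finset α)} (ht : IsBD F t) : ebw E F ≤ bdWidth E F t :=
  Nat.sInf_le ⟨t, ht, rfl⟩

theorem exists_isBD_bdWidth_eq_ebw (E : Finset (Finset α)) (hF : F.Nonempty) :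
    ∃ t, IsBD F t ∧ bdWidth E F t = ebw E F := by
  obtain ⟨t, ht⟩ := BTree.exists_leafLabels_toFinset_eq hF
  exact Nat.sInf_mem (s := {w | ∃ t, IsBD F t ∧ bdWidth E F t = w}) ⟨_, t, ht, rfl⟩

theorem ebw_empty (E : Finset (Finset α)) : ebw E ∅ = 0 := by
  rw [ebw, Nat.sInf_eq_zero]
  refine Or.inr (Set.eq_empty_of_forall_notMem ?_)
  rintro w ⟨t, ht, -⟩
  exact t.leafLabels_ne_zero (Multiset.toFinset_eq_empty.mp ht)

theorem ebw_le_card_vtxs (E F : Finset (Finset α)) : ebw E F ≤ (vtxs F).card := by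
  rcases F.eq_empty_or_nonempty with rfl | hF
  · simp [ebw_empty]
  obtain ⟨t, ht, htw⟩ := exists_isBD_bdWidth_eq_ebw E hF
  exact htw ▸ bdWidth_le_card_vtxs ht

theorem ebw_union_le (hDE : D ⊆ E \ F) (hDF : vtxs D ⊆ vtxs F) : ebw E (F ∪ D) ≤ ebw E F := by
  rcases D.eq_empty_or_nonempty with rfl | hD
  · rw [Finset.union_empty]
  rcases F.eq_empty_or_nonempty with rfl | hF
  · calc ebw E (∅ ∪ D) ≤ (vtxs D).card := by rw [Finset.empty_union]; exact ebw_le_card_vtxs E D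
      _ ≤ (vtxs ∅).card := Finset.card_le_card hDF
      _ = ebw E ∅ := by rw [ebw_empty]; rfl
  obtain ⟨t, ht, htw⟩ := exists_isBD_bdWidth_eq_ebw E hF
  obtain ⟨s, rfl⟩ := BTree.exists_leafLabels_toFinset_eq hD
  calc ebw E (F ∪ lowerSet s) ≤ bdWidth E (F ∪ lowerSet s) (.node2 t s) :=
        ebw_le_bdWidth (isBD_node2 ht rfl)
    _ ≤ bdWidth E F t := bdWidth_node2_le ht hDE hDF
    _ = ebw E F := htw

end

theorem bw_clos_le_general (E F : Finset (Finset V)) (hFE : F ⊆ E) :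
    ebw E (eclos E F) ≤ ebw E F := by
  rw [← Finset.union_sdiff_of_subset (subset_eclos hFE)]
  exact ebw_union_le (Finset.sdiff_subset_sdiff (Finset.filter_subset _ E) subset_rfl)
    ((vtxs_mono Finset.sdiff_subset).trans (vtxs_eclos_subset E F))

/-- For every edge set `F` of a hypergraph, `bw(clos(F)) ≤ bw(F)`. -/
theorem bw_clos_le (E F : Finset (Finset V)) (hFE : F ⊆ E)
    (hne : ∀ e ∈ E, e.Nonempty) :
    ebw E (eclos E F) ≤ ebw E F :=
  bw_clos_le_general E F hFE
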